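/- Let $V, W$ be matrix regular operator spaces and $z \in V^* \otimes W$. Then $z \in (V^* \otimes_\Delta W)_+$ if and only if the associated finite rank map $\Psi(z) : V \to W$ factors as $\Psi(z) = S \circ R$ where $R : V \to M_k$ and $S : M_k \to W$ are completely positive. -/

import Mathlib

open scoped TensorProduct ComplexConjugate ComplexOrder
open Matrix

noncomputable section

/-- Operator norm of a rectangular complex matrix (as an operator between
Euclidean spaces). -/
def opN {m n : Type} [Fintype m] [Fintype n] [DecidableEq m] [DecidableEq n]
    (α : Matrix m n ℂ) : ℝ :=
  ‖LinearMap.toContinuousLinearMap (Matrix.toEuclideanLin α)‖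

section ops

variable {V W : Type} [AddCommGroup V] [Module ℂ V]

/-- Left action of a scalar matrix on a `V`-valued matrix. -/
def mulL {ι κ κ' : Type} [Fintype κ] (α : Matrix ι κ ℂ) (v : Matrix κ κ' V) :
    Matrix ι κ' V := Matrix.of fun i j => ∑ p, α i p • v p j

/-- Right action of a scalar matrix on a `V`-valued matrix. -/
def mulR {ι κ κ' : Type} [Fintype κ] (v : Matrix ι κ V) (β : Matrix κ κ' ℂ) :
    Matrix ι κ' V := Matrix.of fun i j => ∑ p, β p j • v i p

/-- `trip α v β = α * v * β`. -/
def trip {ι κ κ' ι' : Type} [Fintype κ] [Fintype κ'] (α : Matrix ι κ ℂ)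
    (v : Matrix κ κ' V) (β : Matrix κ' ι' ℂ) : Matrix ι ι' V :=
  mulR (mulL α v) β

/-- Entrywise application of a linear map to a matrix. -/
def mapMat {ι ι' : Type} [AddCommGroup W] [Module ℂ W] (T : V →ₗ[ℂ] W)
    (z : Matrix ι ι' V) : Matrix ι ι' W := Matrix.of fun i j => T (z i j)

/-- Amplification of a map into a matrix algebra. -/
def ampS {κ ι : Type} (T : V →ₗ[ℂ] Matrix κ κ ℂ) (z : Matrix ι ι V) :
    Matrix (ι × κ) (ι × κ) ℂ := Matrix.of fun a b => T (z a.1 b.1) a.2 b.2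

end ops

/-- A matrix regular operator space: an operator space which is matrix ordered
with closed proper-compatible cones, satisfying Ruan's axioms and the two
regularity conditions.  Matrix levels are indexed by arbitrary finite index
types. -/
structure MROS (V : Type) [AddCommGroup V] [Module ℂ V] [StarAddMonoid V]
    [StarModule ℂ V] where
  N : ∀ (ι : Type) [Fintype ι] [DecidableEq ι], Matrix ι ι V → ℝ
  pos : ∀ (ι : Type) [Fintype ι] [DecidableEq ι], Set (Matrix ι ι V)
  N_zero : ∀ (ι : Type) [Fintype ι] [DecidableEq ι] (v : Matrix ι ι V),
    N ι v = 0 ↔ v = 0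
  N_add : ∀ (ι : Type) [Fintype ι] [DecidableEq ι] (v w : Matrix ι ι V),
    N ι (v + w) ≤ N ι v + N ι w
  N_smul : ∀ (ι : Type) [Fintype ι] [DecidableEq ι] (c : ℂ) (v : Matrix ι ι V),
    N ι (c • v) = ‖c‖ * N ι v
  N_star : ∀ (ι : Type) [Fintype ι] [DecidableEq ι] (v : Matrix ι ι V),
    N ι vᴴ = N ι v
  ruan1 : ∀ (ι κ : Type) [Fintype ι] [DecidableEq ι] [Fintype κ] [DecidableEq κ]
    (α : Matrix ι κ ℂ) (v : Matrix κ κ V) (β : Matrix κ ι ℂ),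
    N ι (trip α v β) ≤ opN α * N κ v * opN β
  ruan2 : ∀ (ι κ : Type) [Fintype ι] [DecidableEq ι] [Fintype κ] [DecidableEq κ]
    (v : Matrix ι ι V) (w : Matrix κ κ V),
    N (ι ⊕ κ) (Matrix.fromBlocks v 0 0 w) = max (N ι v) (N κ w)
  pos_sa : ∀ (ι : Type) [Fintype ι] [DecidableEq ι] (v : Matrix ι ι V),
    v ∈ pos ι → vᴴ = v
  pos_add : ∀ (ι : Type) [Fintype ι] [DecidableEq ι] (v w : Matrix ι ι V),
    v ∈ pos ι → w ∈ pos ι → v + w ∈ pos ι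
  pos_smul : ∀ (ι : Type) [Fintype ι] [DecidableEq ι] (c : ℝ) (v : Matrix ι ι V),
    0 ≤ c → v ∈ pos ι → (c : ℂ) • v ∈ pos ι
  pos_compress : ∀ (ι κ : Type) [Fintype ι] [DecidableEq ι] [Fintype κ]
    [DecidableEq κ] (α : Matrix ι κ ℂ) (v : Matrix κ κ V),
    v ∈ pos κ → trip α v αᴴ ∈ pos ι
  pos_closed : ∀ (ι : Type) [Fintype ι] [DecidableEq ι] (z : Matrix ι ι V),
    (∀ ε : ℝ, 0 < ε → ∃ u ∈ pos ι, N ι (z - u) < ε) → z ∈ pos ι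
  reg1 : ∀ (ι : Type) [Fintype ι] [DecidableEq ι] (v u : Matrix ι ι V),
    vᴴ = v → u ∈ pos ι → u - v ∈ pos ι → u + v ∈ pos ι → N ι v ≤ N ι u
  reg2 : ∀ (ι : Type) [Fintype ι] [DecidableEq ι] (v : Matrix ι ι V),
    vᴴ = v → N ι v < 1 →
    ∃ u ∈ pos ι, N ι u < 1 ∧ u - v ∈ pos ι ∧ u + v ∈ pos ι

section maps

variable {V W : Type} [AddCommGroup V] [Module ℂ V] [StarAddMonoid V]
  [StarModule ℂ V] [AddCommGroup W] [Module ℂ W] [StarAddMonoid W]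
  [StarModule ℂ W]

/-- The norm of a single element, via the first matrix level. -/
def nrm1 (MV : MROS V) (v : V) : ℝ := MV.N PUnit (Matrix.of fun _ _ => v)

/-- A map into a matrix algebra is completely positive. -/
def IsCPs (MV : MROS V) {κ : Type} [Fintype κ] [DecidableEq κ]
    (φ : V →ₗ[ℂ] Matrix κ κ ℂ) : Prop :=
  ∀ (ι : Type) [Fintype ι] [DecidableEq ι], ∀ z ∈ MV.pos ι, (ampS φ z).PosSemidef

/-- A map into a matrix algebra is completely bounded (in particular
continuous). -/
def IsCBs (MV : MROS V) {κ : Type} [Fintype κ] [DecidableEq κ]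
    (φ : V →ₗ[ℂ] Matrix κ κ ℂ) : Prop :=
  ∃ C : ℝ, ∀ (ι : Type) [Fintype ι] [DecidableEq ι] (z : Matrix ι ι V),
    opN (ampS φ z) ≤ C * MV.N ι z

/-- A map into a matrix algebra is completely contractive. -/
def IsCCs (MV : MROS V) {κ : Type} [Fintype κ] [DecidableEq κ]
    (φ : V →ₗ[ℂ] Matrix κ κ ℂ) : Prop :=
  ∀ (ι : Type) [Fintype ι] [DecidableEq ι] (z : Matrix ι ι V),
    opN (ampS φ z) ≤ MV.N ι z

/-- A linear map between matrix regular operator spaces is completely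
positive. -/
def IsCPm (MV : MROS V) (MW : MROS W) (T : V →ₗ[ℂ] W) : Prop :=
  ∀ (ι : Type) [Fintype ι] [DecidableEq ι], ∀ z ∈ MV.pos ι, mapMat T z ∈ MW.pos ι

/-- Completely bounded norm with respect to given matrix norm data. -/
def cbWith (N1 : ∀ (ι : Type) [Fintype ι] [DecidableEq ι], Matrix ι ι V → ℝ)
    (N2 : ∀ (ι : Type) [Fintype ι] [DecidableEq ι], Matrix ι ι W → ℝ)
    (T : V →ₗ[ℂ] W) : ℝ :=
  sInf { C : ℝ | 0 ≤ C ∧ ∀ (ι : Type) [Fintype ι] [DecidableEq ι]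
    (z : Matrix ι ι V), N2 ι (mapMat T z) ≤ C * N1 ι z }

/-- The completely bounded norm of a map between matrix regular operator
spaces. -/
def cbN (MV : MROS V) (MW : MROS W) (T : V →ₗ[ℂ] W) : ℝ := cbWith MV.N MW.N T

/-- The adjoint map `T^*(v) = (T(v^*))^*`. -/
def adjMap (T : V →ₗ[ℂ] W) : V →ₗ[ℂ] W where
  toFun v := star (T (star v))
  map_add' v w := by simp [star_add, map_add]
  map_smul' c v := by simp [star_smul, _root_.map_smul]

/-- `T` is decomposable, witnessed by completely positive maps `S1`, `S2`,
relative to given cone data on domain and codomain. -/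
def IsDecompW
    (P1 : ∀ (ι : Type) [Fintype ι] [DecidableEq ι], Set (Matrix ι ι V))
    (P2 : ∀ (ι : Type) [Fintype ι] [DecidableEq ι], Set (Matrix ι ι W))
    (T S1 S2 : V →ₗ[ℂ] W) : Prop :=
  ∀ (ι : Type) [Fintype ι] [DecidableEq ι], ∀ v ∈ P1 ι,
    Matrix.fromBlocks (mapMat S1 v) (mapMat T v) (mapMat (adjMap T) v)
      (mapMat S2 v) ∈ P2 (ι ⊕ ι)

/-- `T` is decomposable. -/
def Decomp (MV : MROS V) (MW : MROS W) (T : V →ₗ[ℂ] W) : Prop :=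
  ∃ S1 S2 : V →ₗ[ℂ] W, IsDecompW MV.pos MW.pos T S1 S2

/-- Operator norm (at the first level) of a linear map, with respect to given
level-one norms. -/
def op1With (n1 : V → ℝ) (n2 : W → ℝ) (T : V →ₗ[ℂ] W) : ℝ :=
  sInf { C : ℝ | 0 ≤ C ∧ ∀ v : V, n2 (T v) ≤ C * n1 v }

/-- Decomposable norm with respect to given cone and norm data. -/
def decWith
    (P1 : ∀ (ι : Type) [Fintype ι] [DecidableEq ι], Set (Matrix ι ι V))
    (P2 : ∀ (ι : Type) [Fintype ι] [DecidableEq ι], Set (Matrix ι ι W))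
    (n1 : V → ℝ) (n2 : W → ℝ) (T : V →ₗ[ℂ] W) : ℝ :=
  sInf { c : ℝ | ∃ S1 S2 : V →ₗ[ℂ] W, IsDecompW P1 P2 T S1 S2 ∧
    op1With n1 n2 S1 ≤ c ∧ op1With n1 n2 S2 ≤ c }

/-- The decomposable norm of a map between matrix regular operator spaces. -/
def decN (MV : MROS V) (MW : MROS W) (T : V →ₗ[ℂ] W) : ℝ :=
  decWith MV.pos MW.pos (nrm1 MV) (nrm1 MW) T

end maps

section tensor

variable {V W : Type} [AddCommGroup V] [Module ℂ V] [StarAddMonoid V]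
  [StarModule ℂ V] [AddCommGroup W] [Module ℂ W] [StarAddMonoid W]
  [StarModule ℂ W]

/-- The Kronecker product of a `V`-valued and a `W`-valued matrix, with values
in `V ⊗ W`. -/
def kron {ι κ : Type} (v : Matrix ι ι V) (w : Matrix κ κ W) :
    Matrix (ι × κ) (ι × κ) (V ⊗[ℂ] W) :=
  Matrix.of fun a b => v a.1 b.1 ⊗ₜ[ℂ] w a.2 b.2

/-- The tensor product `φ ⊗ ψ : V ⊗ W → M_{k×l}` of two matrix-algebra valued
maps. -/
def pairMap {k l : Type} (φ : V →ₗ[ℂ] Matrix k k ℂ)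
    (ψ : W →ₗ[ℂ] Matrix l l ℂ) :
    (V ⊗[ℂ] W) →ₗ[ℂ] Matrix (k × l) (k × l) ℂ :=
  TensorProduct.lift (LinearMap.mk₂ ℂ
    (fun v w => Matrix.of fun a b => φ v a.1 b.1 * ψ w a.2 b.2)
    (fun v v' w => by
      ext a b
      simp [map_add, Matrix.add_apply, add_mul])
    (fun c v w => by
      ext a b
      simp [_root_.map_smul, Matrix.smul_apply, smul_eq_mul]
      ring)
    (fun v w w' => by
      ext a b
      simp [map_add, Matrix.add_apply, mul_add])
    (fun c v w => by
      ext a b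
      simp [_root_.map_smul, Matrix.smul_apply, smul_eq_mul]
      ring))

variable (MV : MROS V) (MW : MROS W)

/-- The cone `M_ι(V ⊗_Δ W)_+` of elements `α (v ⊗ w) α^*` with `v, w`
positive. -/
def DeltaPos (ι : Type) [Fintype ι] [DecidableEq ι] :
    Set (Matrix ι ι (V ⊗[ℂ] W)) :=
  { z | ∃ (k l : ℕ) (v : Matrix (Fin k) (Fin k) V)
      (w : Matrix (Fin l) (Fin l) W) (α : Matrix ι (Fin k × Fin l) ℂ),
      v ∈ MV.pos (Fin k) ∧ w ∈ MW.pos (Fin l) ∧ z = trip α (kron v w) αᴴ }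

/-- `|z|_Δ` for `z ∈ M_ι(V ⊗_Δ W)_+`. -/
def DeltaAbs (ι : Type) [Fintype ι] [DecidableEq ι]
    (z : Matrix ι ι (V ⊗[ℂ] W)) : ℝ :=
  sInf { r : ℝ | ∃ (k l : ℕ) (v : Matrix (Fin k) (Fin k) V)
    (w : Matrix (Fin l) (Fin l) W) (α : Matrix ι (Fin k × Fin l) ℂ),
    v ∈ MV.pos (Fin k) ∧ w ∈ MW.pos (Fin l) ∧ z = trip α (kron v w) αᴴ ∧
    r = opN α ^ 2 * MV.N (Fin k) v * MW.N (Fin l) w }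

/-- The norm `‖z‖_Δ`. -/
def DeltaN [Star (V ⊗[ℂ] W)] (ι : Type) [Fintype ι] [DecidableEq ι]
    (z : Matrix ι ι (V ⊗[ℂ] W)) : ℝ :=
  sInf { r : ℝ | ∃ u u' : Matrix ι ι (V ⊗[ℂ] W),
    Matrix.fromBlocks u z zᴴ u' ∈ DeltaPos MV MW (ι ⊕ ι) ∧
    r = max (DeltaAbs MV MW ι u) (DeltaAbs MV MW ι u') }

/-- The closed cone `M_ι(V ⊗_Δ W)^+` (closure of `M_ι(V ⊗_Δ W)_+` in
`‖·‖_Δ`). -/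
def DeltaPosC [Star (V ⊗[ℂ] W)] (ι : Type) [Fintype ι] [DecidableEq ι] :
    Set (Matrix ι ι (V ⊗[ℂ] W)) :=
  { z | ∀ ε : ℝ, 0 < ε → ∃ u ∈ DeltaPos MV MW ι, DeltaN MV MW ι (z - u) < ε }

/-- The cone `M_ι(V ⊗_δ W)_+`: elements whose pairings with all continuous
completely positive maps into matrix algebras are positive semidefinite. -/
def deltaPos (ι : Type) [Fintype ι] [DecidableEq ι] :
    Set (Matrix ι ι (V ⊗[ℂ] W)) :=
  { z | ∀ (k l : ℕ) (φ : V →ₗ[ℂ] Matrix (Fin k) (Fin k) ℂ)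
      (ψ : W →ₗ[ℂ] Matrix (Fin l) (Fin l) ℂ),
      IsCPs MV φ → IsCBs MV φ → IsCPs MW ψ → IsCBs MW ψ →
      (ampS (pairMap φ ψ) z).PosSemidef }

/-- `|z|_δ` for `z ∈ M_ι(V ⊗_δ W)_+`. -/
def deltaAbs (ι : Type) [Fintype ι] [DecidableEq ι]
    (z : Matrix ι ι (V ⊗[ℂ] W)) : ℝ :=
  sSup { r : ℝ | ∃ (k l : ℕ) (φ : V →ₗ[ℂ] Matrix (Fin k) (Fin k) ℂ)
    (ψ : W →ₗ[ℂ] Matrix (Fin l) (Fin l) ℂ),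
    IsCPs MV φ ∧ IsCCs MV φ ∧ IsCPs MW ψ ∧ IsCCs MW ψ ∧
    r = opN (ampS (pairMap φ ψ) z) }

/-- The norm `‖z‖_δ`. -/
def deltaN [Star (V ⊗[ℂ] W)] (ι : Type) [Fintype ι] [DecidableEq ι]
    (z : Matrix ι ι (V ⊗[ℂ] W)) : ℝ :=
  sInf { r : ℝ | ∃ u u' : Matrix ι ι (V ⊗[ℂ] W),
    Matrix.fromBlocks u z zᴴ u' ∈ deltaPos MV MW (ι ⊕ ι) ∧
    r = max (deltaAbs MV MW ι u) (deltaAbs MV MW ι u') }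

/-- The closed cone `M_ι(V ⊗_δ W)^+`. -/
def deltaPosC [Star (V ⊗[ℂ] W)] (ι : Type) [Fintype ι] [DecidableEq ι] :
    Set (Matrix ι ι (V ⊗[ℂ] W)) :=
  { z | ∀ ε : ℝ, 0 < ε → ∃ u ∈ deltaPos MV MW ι, deltaN MV MW ι (z - u) < ε }

/-- The injective operator space tensor norm `‖z‖_∨`: the supremum of pairings
with all pairs of complete contractions into matrix algebras. -/
def veeN (ι : Type) [Fintype ι] [DecidableEq ι]
    (z : Matrix ι ι (V ⊗[ℂ] W)) : ℝ :=
  sSup { r : ℝ | ∃ (k l : ℕ) (φ : V →ₗ[ℂ] Matrix (Fin k) (Fin k) ℂ)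
    (ψ : W →ₗ[ℂ] Matrix (Fin l) (Fin l) ℂ),
    IsCCs MV φ ∧ IsCCs MW ψ ∧ r = opN (ampS (pairMap φ ψ) z) }

end tensor

section dual

variable {V : Type} [AddCommGroup V] [Module ℂ V] [StarAddMonoid V]
  [StarModule ℂ V]

/-- The dual matrix cone on `M_ι(V^*)` : matrices of functionals which pair
positively with all positive matrices over `V`. -/
def dualPos (MV : MROS V) (ι : Type) [Fintype ι] [DecidableEq ι]
    (F : Matrix ι ι (V →ₗ[ℂ] ℂ)) : Prop :=
  ∀ (k : ℕ) (v : Matrix (Fin k) (Fin k) V), v ∈ MV.pos (Fin k) →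
    (Matrix.of fun (a b : Fin k × ι) => F a.2 b.2 (v a.1 b.1)).PosSemidef

/-- The dual matrix norm on `M_ι(V^*)`. -/
def dualN (MV : MROS V) (ι : Type) [Fintype ι] [DecidableEq ι]
    (F : Matrix ι ι (V →ₗ[ℂ] ℂ)) : ℝ :=
  sSup { r : ℝ | ∃ (k : ℕ) (v : Matrix (Fin k) (Fin k) V),
    MV.N (Fin k) v ≤ 1 ∧
    r = opN (Matrix.of fun (a b : Fin k × ι) => F a.2 b.2 (v a.1 b.1)) }

end dual

section aux

variable {V W : Type} [AddCommGroup V] [Module ℂ V] [StarAddMonoid V]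
  [StarModule ℂ V] [AddCommGroup W] [Module ℂ W] [StarAddMonoid W]
  [StarModule ℂ W]

lemma trip_apply {ι κ κ' ι' : Type} [Fintype κ] [Fintype κ'] (α : Matrix ι κ ℂ)
    (v : Matrix κ κ' V) (β : Matrix κ' ι' ℂ) (i : ι) (j : ι') :
    trip α v β i j = ∑ p, β p j • ∑ q, α i q • v q p := rfl

lemma pos_zero (M : MROS W) {l : ℕ} {w : Matrix (Fin l) (Fin l) W}
    (hw : w ∈ M.pos (Fin l)) (κ : Type) [Fintype κ] [DecidableEq κ] :
    (0 : Matrix κ κ W) ∈ M.pos κ := by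
  have h := M.pos_compress κ (Fin l) 0 w hw
  have : trip (0 : Matrix κ (Fin l) ℂ) w (0 : Matrix κ (Fin l) ℂ)ᴴ = 0 := by
    ext i j
    simp [trip_apply]
  rwa [this] at h

lemma pos_sum (M : MROS W) {ι : Type} [Fintype ι] [DecidableEq ι]
    (h0 : (0 : Matrix ι ι W) ∈ M.pos ι) {A : Type} (s : Finset A)
    (f : A → Matrix ι ι W) (h : ∀ a ∈ s, f a ∈ M.pos ι) :
    ∑ a ∈ s, f a ∈ M.pos ι :=
  Finset.sum_induction f (· ∈ M.pos ι) (fun a b ha hb => M.pos_add ι a b ha hb) h0 h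

lemma dth_inj : Function.Injective (dualTensorHom ℂ V W) := by
  rw [injective_iff_map_eq_zero]
  intro z hz
  classical
  set b := Module.Basis.ofVectorSpace ℂ W with hb
  set e : ((V →ₗ[ℂ] ℂ) ⊗[ℂ] W) ≃ₗ[ℂ] (_ →₀ (V →ₗ[ℂ] ℂ)) :=
    (TensorProduct.congr (LinearEquiv.refl ℂ (V →ₗ[ℂ] ℂ)) b.repr).trans
      (TensorProduct.finsuppScalarRight ℂ ℂ (V →ₗ[ℂ] ℂ) _) with he
  have key : ∀ (t : (V →ₗ[ℂ] ℂ) ⊗[ℂ] W) (i) (v : V),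
      (e t) i v = b.repr (dualTensorHom ℂ V W t v) i := by
    intro t
    induction t using TensorProduct.induction_on with
    | zero =>
      intro i v
      rw [e.map_zero, (dualTensorHom ℂ V W).map_zero]
      simp
    | tmul f w =>
      intro i v
      simp only [he, LinearEquiv.trans_apply, TensorProduct.congr_tmul,
        LinearEquiv.refl_apply, TensorProduct.finsuppScalarRight_apply_tmul_apply,
        dualTensorHom_apply, _root_.map_smul, Finsupp.smul_apply, smul_eq_mul,
        LinearMap.smul_apply]
      ring
    | add x y hx hy =>
      intro i v
      simp only [map_add, Finsupp.add_apply, LinearMap.add_apply, hx, hy]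
  have hez : e z = 0 := by
    ext i v
    rw [Finsupp.zero_apply, LinearMap.zero_apply, key z i v, hz]
    simp
  have := congrArg e.symm hez
  simpa using this

end aux

section aux2
set_option linter.unusedSectionVars false

variable {V W : Type} [AddCommGroup V] [Module ℂ V] [StarAddMonoid V]
  [StarModule ℂ V] [AddCommGroup W] [Module ℂ W] [StarAddMonoid W]
  [StarModule ℂ W]

/-- The map `V → M_k` associated to a matrix of functionals. -/
def Rmap {k : Type} [Fintype k] [DecidableEq k] (F : Matrix k k (V →ₗ[ℂ] ℂ)) :
    V →ₗ[ℂ] Matrix k k ℂ where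
  toFun x := Matrix.of fun i j => F i j x
  map_add' x y := by ext i j; simp
  map_smul' c x := by ext i j; simp

lemma pos_reindex (M : MROS V) {ι κ : Type} [Fintype ι] [DecidableEq ι]
    [Fintype κ] [DecidableEq κ] (e : ι ≃ κ) {u : Matrix ι ι V}
    (hu : u ∈ M.pos ι) : u.submatrix e.symm e.symm ∈ M.pos κ := by
  have h := M.pos_compress κ ι
    (Matrix.of fun i j => if j = e.symm i then (1 : ℂ) else 0) u hu
  have heq : trip (Matrix.of fun i j => if j = e.symm i then (1 : ℂ) else 0) u
      (Matrix.of fun i j => if j = e.symm i then (1 : ℂ) else 0)ᴴ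
      = u.submatrix e.symm e.symm := by
    ext i j
    simp [trip_apply, Matrix.conjTranspose_apply, apply_ite, ite_smul]
  rwa [heq] at h

lemma Rmap_cp (MV : MROS V) {k : Type} [Fintype k] [DecidableEq k]
    (F : Matrix k k (V →ₗ[ℂ] ℂ)) (hF : dualPos MV k F) : IsCPs MV (Rmap F) := by
  intro ι _ _ u hu
  set e := Fintype.equivFin ι
  have hu' := pos_reindex MV e hu
  have h := hF (Fintype.card ι) (u.submatrix e.symm e.symm) hu'
  have heq : ampS (Rmap F) u =
      (Matrix.of fun (a b : Fin (Fintype.card ι) × k) =>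
        F a.2 b.2 ((u.submatrix e.symm e.symm) a.1 b.1)).submatrix
        (fun a : ι × k => (e a.1, a.2)) (fun a : ι × k => (e a.1, a.2)) := by
    ext a b
    simp [ampS, Rmap]
  rw [heq]
  exact h.submatrix _

/-- The map `M_k → W` associated to coefficients `c` and a `W`-matrix `w`. -/
def Smap {k l : Type} [Fintype k] [Fintype l] (c : k × l → ℂ)
    (w : Matrix l l W) : Matrix k k ℂ →ₗ[ℂ] W where
  toFun m := ∑ p : k × l, ∑ q : k × l,
    (c p * (starRingEnd ℂ) (c q) * m p.1 q.1) • w p.2 q.2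
  map_add' m m' := by
    rw [← Finset.sum_add_distrib]
    refine Finset.sum_congr rfl fun p _ => ?_
    rw [← Finset.sum_add_distrib]
    refine Finset.sum_congr rfl fun q _ => ?_
    rw [← add_smul]
    congr 1
    simp [mul_add]
  map_smul' a m := by
    simp only [RingHom.id_apply, Finset.smul_sum, smul_smul]
    refine Finset.sum_congr rfl fun p _ => Finset.sum_congr rfl fun q _ => ?_
    congr 1
    simp [Matrix.smul_apply, smul_eq_mul]
    ring

end aux2

section aux3
set_option linter.unusedSectionVars false
set_option maxHeartbeats 1000000

variable {V W : Type} [AddCommGroup V] [Module ℂ V] [StarAddMonoid V]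
  [StarModule ℂ V] [AddCommGroup W] [Module ℂ W] [StarAddMonoid W]
  [StarModule ℂ W]

lemma sum_rot3 {A B C M : Type} [AddCommMonoid M] [Fintype A] [Fintype B]
    [Fintype C] (f : A → B → C → M) :
    ∑ a, ∑ b, ∑ c, f a b c = ∑ c, ∑ a, ∑ b, f a b c := by
  calc ∑ a, ∑ b, ∑ c, f a b c = ∑ a, ∑ c, ∑ b, f a b c :=
      Finset.sum_congr rfl fun a _ => Finset.sum_comm
    _ = ∑ c, ∑ a, ∑ b, f a b c := Finset.sum_comm

lemma sum_rot {A B C D M : Type} [AddCommMonoid M] [Fintype A] [Fintype B]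
    [Fintype C] [Fintype D] (f : A → B → C → D → M) :
    ∑ a, ∑ b, ∑ c, ∑ d, f a b c d = ∑ d, ∑ b, ∑ c, ∑ a, f a b c d := by
  calc ∑ a, ∑ b, ∑ c, ∑ d, f a b c d
      = ∑ a, ∑ b, ∑ d, ∑ c, f a b c d :=
        Finset.sum_congr rfl fun a _ => Finset.sum_congr rfl fun b _ =>
          Finset.sum_comm
    _ = ∑ a, ∑ d, ∑ b, ∑ c, f a b c d :=
        Finset.sum_congr rfl fun a _ => Finset.sum_comm
    _ = ∑ d, ∑ a, ∑ b, ∑ c, f a b c d := Finset.sum_comm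
    _ = ∑ d, ∑ b, ∑ a, ∑ c, f a b c d :=
        Finset.sum_congr rfl fun d _ => Finset.sum_comm
    _ = ∑ d, ∑ b, ∑ c, ∑ a, f a b c d :=
        Finset.sum_congr rfl fun d _ => Finset.sum_congr rfl fun b _ =>
          Finset.sum_comm

lemma Smap_pos (MW : MROS W) {k : Type} [Fintype k] [DecidableEq k] {l : ℕ}
    (c : k × Fin l → ℂ) {w : Matrix (Fin l) (Fin l) W}
    (hw : w ∈ MW.pos (Fin l)) (ι : Type) [Fintype ι] [DecidableEq ι]
    (x : Matrix ι ι (Matrix k k ℂ))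
    (hx : (Matrix.of fun (a b : ι × k) => x a.1 b.1 a.2 b.2).PosSemidef) :
    mapMat (Smap c w) x ∈ MW.pos ι := by
  classical
  obtain ⟨γ, hγ⟩ : ∃ γ : Matrix (ι × k) (ι × k) ℂ, _ = γᴴ * γ := by
    open scoped MatrixOrder in
    exact CStarAlgebra.nonneg_iff_eq_star_mul_self.mp hx.nonneg
  set δ : Matrix ι ((ι × k) × Fin l) ℂ := Matrix.of fun a P =>
    ∑ i : k, c (i, P.2) * (starRingEnd ℂ) (γ P.1 (a, i)) with hδ
  set Wt : Matrix ((ι × k) × Fin l) ((ι × k) × Fin l) W := Matrix.of fun P Q =>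
    if P.1 = Q.1 then w P.2 Q.2 else 0 with hWt
  have hWtpos : Wt ∈ MW.pos ((ι × k) × Fin l) := by
    have : Wt = ∑ cc : ι × k, trip
        (Matrix.of fun (P : (ι × k) × Fin l) (t : Fin l) =>
          if P.1 = cc ∧ P.2 = t then (1 : ℂ) else 0) w
        (Matrix.of fun (P : (ι × k) × Fin l) (t : Fin l) =>
          if P.1 = cc ∧ P.2 = t then (1 : ℂ) else 0)ᴴ := by
      ext P Q
      rw [Matrix.sum_apply]
      have hterm : ∀ cc : ι × k, trip
          (Matrix.of fun (P : (ι × k) × Fin l) (t : Fin l) =>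
            if P.1 = cc ∧ P.2 = t then (1 : ℂ) else 0) w
          (Matrix.of fun (P : (ι × k) × Fin l) (t : Fin l) =>
            if P.1 = cc ∧ P.2 = t then (1 : ℂ) else 0)ᴴ P Q =
          if P.1 = cc ∧ Q.1 = cc then w P.2 Q.2 else 0 := by
        intro cc
        rw [trip_apply]
        by_cases hP : P.1 = cc <;> by_cases hQ : Q.1 = cc <;>
          simp [Matrix.conjTranspose_apply, apply_ite, ite_smul, hP, hQ]
      simp only [hterm]
      by_cases h : P.1 = Q.1
      · rw [h]
        simp [hWt, h]
      · rw [Finset.sum_eq_zero, hWt]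
        · simp [h]
        · intro cc _
          rw [if_neg]
          rintro ⟨h1, h2⟩
          exact h (h1.trans h2.symm)
    rw [this]
    refine pos_sum MW (pos_zero MW hw _) _ _ fun cc _ => ?_
    exact MW.pos_compress _ _ _ w hw
  have key : mapMat (Smap c w) x = trip δ Wt δᴴ := by
    ext a b
    -- RHS: collapse the `Wt` diagonal
    have hrhs : trip δ Wt δᴴ a b = ∑ cc : ι × k, ∑ t : Fin l, ∑ s : Fin l,
        ((starRingEnd ℂ) (δ b (cc, t)) * δ a (cc, s)) • w s t := by
      rw [trip_apply]
      rw [Fintype.sum_prod_type]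
      refine Finset.sum_congr rfl fun cc _ => Finset.sum_congr rfl fun t _ => ?_
      rw [Matrix.conjTranspose_apply, Finset.smul_sum]
      rw [Fintype.sum_prod_type]
      rw [Finset.sum_comm]
      refine Finset.sum_congr rfl fun s _ => ?_
      rw [Finset.sum_eq_single cc]
      · simp [hWt, smul_smul]
      · intro cc' _ hne
        simp [hWt, hne]
      · simp
    rw [hrhs]
    -- LHS: expand `x` via `γ`
    have hX : ∀ (p q : k), x a b p q =
        ∑ cc : ι × k, (starRingEnd ℂ) (γ cc (a, p)) * γ cc (b, q) := by
      intro p q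
      have := congrFun (congrFun hγ (a, p)) (b, q)
      simpa [Matrix.mul_apply, Matrix.conjTranspose_apply] using this
    show Smap c w (x a b) = _
    have hlhs : Smap c w (x a b) = ∑ p : k × Fin l, ∑ q : k × Fin l,
        ∑ cc : ι × k, (c p * (starRingEnd ℂ) (c q) *
          ((starRingEnd ℂ) (γ cc (a, p.1)) * γ cc (b, q.1))) • w p.2 q.2 := by
      refine Finset.sum_congr rfl fun p _ => Finset.sum_congr rfl fun q _ => ?_
      rw [hX p.1 q.1, Finset.mul_sum, Finset.sum_smul]
    rw [hlhs]
    -- bring `cc` outermost on the left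
    rw [sum_rot3 (fun (p q : k × Fin l) (cc : ι × k) =>
      (c p * (starRingEnd ℂ) (c q) *
        ((starRingEnd ℂ) (γ cc (a, p.1)) * γ cc (b, q.1))) • w p.2 q.2)]
    refine Finset.sum_congr rfl fun cc _ => ?_
    -- expand δ on the right
    have hterm : ∀ (t s : Fin l),
        ((starRingEnd ℂ) (δ b (cc, t)) * δ a (cc, s)) • w s t =
        ∑ j : k, ∑ i : k, ((starRingEnd ℂ) (c (j, t)) * γ cc (b, j) *
          (c (i, s) * (starRingEnd ℂ) (γ cc (a, i)))) • w s t := by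
      intro t s
      have hδc : (starRingEnd ℂ) (δ b (cc, t)) =
          ∑ j : k, (starRingEnd ℂ) (c (j, t)) * γ cc (b, j) := by
        simp [hδ, map_sum]
      rw [hδc, hδ]
      simp only [Matrix.of_apply]
      rw [Finset.sum_mul_sum]
      simp only [Finset.sum_smul]
    have hrhs2 : (∑ t : Fin l, ∑ s : Fin l,
        ((starRingEnd ℂ) (δ b (cc, t)) * δ a (cc, s)) • w s t) =
        ∑ t : Fin l, ∑ s : Fin l, ∑ j : k, ∑ i : k,
        ((starRingEnd ℂ) (c (j, t)) * γ cc (b, j) *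
          (c (i, s) * (starRingEnd ℂ) (γ cc (a, i)))) • w s t := by
      exact Finset.sum_congr rfl fun t _ => Finset.sum_congr rfl fun s _ =>
        hterm t s
    rw [hrhs2, sum_rot]
    simp only [Fintype.sum_prod_type]
    refine Finset.sum_congr rfl fun i _ => Finset.sum_congr rfl fun s _ =>
      Finset.sum_congr rfl fun j _ => Finset.sum_congr rfl fun t _ => ?_
    congr 1
    ring
  rw [key]
  exact MW.pos_compress _ _ δ Wt hWtpos
end aux3


set_option maxHeartbeats 1000000 in
/-- Characterization of the Δ-positive elements of `V^* ⊗ W` as factorizable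
finite rank maps. -/
theorem stmt_19 {V W : Type} [AddCommGroup V] [Module ℂ V] [StarAddMonoid V]
    [StarModule ℂ V] [AddCommGroup W] [Module ℂ W] [StarAddMonoid W]
    [StarModule ℂ W] [StarAddMonoid (V →ₗ[ℂ] ℂ)] [StarModule ℂ (V →ₗ[ℂ] ℂ)]
    (hds : ∀ (f : V →ₗ[ℂ] ℂ) (v : V),
      (star f) v = starRingEnd ℂ (f (star v)))
    [StarAddMonoid ((V →ₗ[ℂ] ℂ) ⊗[ℂ] W)]
    [StarModule ℂ ((V →ₗ[ℂ] ℂ) ⊗[ℂ] W)]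
    (hst : ∀ (f : V →ₗ[ℂ] ℂ) (w : W),
      star (f ⊗ₜ[ℂ] w) = star f ⊗ₜ[ℂ] star w)
    (MV : MROS V) (MW : MROS W) (MVd : MROS (V →ₗ[ℂ] ℂ))
    (hMVdpos : ∀ (ι : Type) [Fintype ι] [DecidableEq ι]
      (F : Matrix ι ι (V →ₗ[ℂ] ℂ)), F ∈ MVd.pos ι ↔ dualPos MV ι F)
    (hMVdN : ∀ (ι : Type) [Fintype ι] [DecidableEq ι]
      (F : Matrix ι ι (V →ₗ[ℂ] ℂ)), MVd.N ι F = dualN MV ι F)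
    (z : (V →ₗ[ℂ] ℂ) ⊗[ℂ] W) :
    (Matrix.of fun _ _ => z : Matrix PUnit PUnit ((V →ₗ[ℂ] ℂ) ⊗[ℂ] W)) ∈
        DeltaPos MVd MW PUnit ↔
      ∃ (k : ℕ) (R : V →ₗ[ℂ] Matrix (Fin k) (Fin k) ℂ)
        (S : Matrix (Fin k) (Fin k) ℂ →ₗ[ℂ] W),
        IsCPs MV R ∧
        (∀ (ι : Type) [Fintype ι] [DecidableEq ι]
          (x : Matrix ι ι (Matrix (Fin k) (Fin k) ℂ)),
          (Matrix.of fun (a b : ι × Fin k) =>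
            x a.1 b.1 a.2 b.2).PosSemidef → mapMat S x ∈ MW.pos ι) ∧
        dualTensorHom ℂ V W z = S ∘ₗ R := by
    classical
  constructor
  · rintro ⟨k, l, v, w, α, hv, hw, hz⟩
    set c : Fin k × Fin l → ℂ := fun p => α PUnit.unit p with hc
    refine ⟨k, Rmap v, Smap c w, Rmap_cp MV v ((hMVdpos (Fin k) v).mp hv),
      fun ι _ _ x hx => Smap_pos MW c hw ι x hx, ?_⟩
    have hzz : z = ∑ p : Fin k × Fin l, (starRingEnd ℂ) (c p) •
        ∑ q : Fin k × Fin l, c q • (v q.1 p.1 ⊗ₜ[ℂ] w q.2 p.2) := by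
      have h1 : z = trip α (kron v w) αᴴ PUnit.unit PUnit.unit := by
        rw [← hz]; rfl
      rw [h1]; unfold trip mulR mulL; simp only [Matrix.of_apply]
      simp [Matrix.conjTranspose_apply, kron, hc]
    ext x
    rw [hzz, map_sum, LinearMap.sum_apply]
    have hterm : ∀ p : Fin k × Fin l,
        (dualTensorHom ℂ V W ((starRingEnd ℂ) (c p) •
          ∑ q : Fin k × Fin l, c q • (v q.1 p.1 ⊗ₜ[ℂ] w q.2 p.2))) x
        = ∑ q : Fin k × Fin l,
            (c q * (starRingEnd ℂ) (c p) * v q.1 p.1 x) • w q.2 p.2 := by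
      intro p
      rw [_root_.map_smul, map_sum, LinearMap.smul_apply, LinearMap.sum_apply,
        Finset.smul_sum]
      refine Finset.sum_congr rfl fun q _ => ?_
      rw [_root_.map_smul, LinearMap.smul_apply, dualTensorHom_apply,
        smul_smul, smul_smul]
      congr 1
      ring
    simp only [hterm]
    have hRS : (Smap c w ∘ₗ Rmap v) x = ∑ p : Fin k × Fin l,
        ∑ q : Fin k × Fin l,
        (c p * (starRingEnd ℂ) (c q) * v p.1 q.1 x) • w p.2 q.2 := rfl
    rw [hRS]
    exact Finset.sum_comm
  · rintro ⟨k, R, S, hR, hS, hfac⟩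
    set F : Matrix (Fin k) (Fin k) (V →ₗ[ℂ] ℂ) := Matrix.of fun i j =>
      { toFun := fun x => R x i j
        map_add' := by intro x y; simp
        map_smul' := by intro a x; simp } with hF
    set w : Matrix (Fin k) (Fin k) W :=
      mapMat S (Matrix.of fun i j => Matrix.single i j 1) with hw
    set α : Matrix PUnit (Fin k × Fin k) ℂ :=
      Matrix.of fun _ p => if p.1 = p.2 then 1 else 0 with hα
    have hFpos : F ∈ MVd.pos (Fin k) := by
      rw [hMVdpos]
      intro k' u hu
      exact hR (Fin k') u hu
    have hwpos : w ∈ MW.pos (Fin k) := by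
      apply hS
      have heq : (Matrix.of fun (a b : Fin k × Fin k) =>
          (Matrix.of fun i j => Matrix.single i j (1:ℂ)) a.1 b.1 a.2 b.2) =
          (Matrix.of fun (a : Fin k × Fin k) (_ : PUnit.{1}) =>
            if a.1 = a.2 then (1:ℂ) else 0) *
          (Matrix.of fun (a : Fin k × Fin k) (_ : PUnit.{1}) =>
            if a.1 = a.2 then (1:ℂ) else 0)ᴴ := by
        ext a b
        simp [Matrix.mul_apply, Matrix.conjTranspose_apply,
          Matrix.single, apply_ite, ite_and]
        split_ifs <;> simp_all <;> tauto
      rw [heq]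
      exact Matrix.posSemidef_self_mul_conjTranspose _
    refine ⟨k, k, F, w, α, hFpos, hwpos, ?_⟩
    ext u1 u2
    show z = trip α (kron F w) αᴴ u1 u2
    have hz0 : trip α (kron F w) αᴴ u1 u2 =
        ∑ i : Fin k, ∑ j : Fin k, (F j i ⊗ₜ[ℂ] w j i) := by
      unfold trip mulR mulL; simp only [Matrix.of_apply]
      have h1 : ∀ p : Fin k × Fin k,
          (∑ q : Fin k × Fin k, α u1 q • kron F w q p) =
          ∑ j : Fin k, kron F w (j, j) p := by
        intro p
        rw [Fintype.sum_prod_type]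
        simp [hα, ite_smul]
      have h2 : ∀ p : Fin k × Fin k, αᴴ p u2 • ∑ j : Fin k, kron F w (j, j) p =
          if p.1 = p.2 then ∑ j : Fin k, kron F w (j, j) p else 0 := by
        intro p
        by_cases hp : p.1 = p.2 <;>
          simp [hα, Matrix.conjTranspose_apply, hp]
      calc (∑ p : Fin k × Fin k, αᴴ p u2 • ∑ q : Fin k × Fin k,
              α u1 q • kron F w q p)
          = ∑ p : Fin k × Fin k,
              if p.1 = p.2 then ∑ j : Fin k, kron F w (j, j) p else 0 := by
            refine Finset.sum_congr rfl fun p _ => ?_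
            rw [h1, h2]
        _ = ∑ i : Fin k, ∑ j : Fin k, kron F w (j, j) (i, i) := by
            rw [Fintype.sum_prod_type]
            simp
        _ = ∑ i : Fin k, ∑ j : Fin k, (F j i ⊗ₜ[ℂ] w j i) := rfl
    rw [hz0]
    apply dth_inj
    rw [hfac]
    ext x
    have hRHS : (dualTensorHom ℂ V W
        (∑ i : Fin k, ∑ j : Fin k, (F j i ⊗ₜ[ℂ] w j i))) x =
        ∑ i : Fin k, ∑ j : Fin k, R x j i • w j i := by
      rw [map_sum, LinearMap.sum_apply]
      refine Finset.sum_congr rfl fun i _ => ?_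
      rw [map_sum, LinearMap.sum_apply]
      refine Finset.sum_congr rfl fun j _ => ?_
      rw [dualTensorHom_apply]
      rfl
    rw [hRHS]
    have hLHS : (S ∘ₗ R) x = ∑ i : Fin k, ∑ j : Fin k, R x i j • w i j := by
      show S (R x) = _
      conv_lhs => rw [Matrix.matrix_eq_sum_single (R x)]
      rw [map_sum]
      refine Finset.sum_congr rfl fun i _ => ?_
      rw [map_sum]
      refine Finset.sum_congr rfl fun j _ => ?_
      have : Matrix.single i j (R x i j) =
          R x i j • Matrix.single i j (1 : ℂ) := by
        rw [Matrix.smul_single, smul_eq_mul, mul_one]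
      rw [this, _root_.map_smul]
      rfl
    rw [hLHS]
    exact Finset.sum_comm
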